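/- Let M = A·W' where A is a nonnegative n×r real matrix with s = rank(A) ≥ 1 and W' is a nonnegative r×m real matrix. List the elements of C(A) in increasing lexicographic order as V_1 ≺ V_2 ≺ … ≺ V_k. Suppose σ : {1,…,m} → {1,…,k} is a function such that for every i: the support of the column W'_i is contained in V_{σ(i)}, and V_{σ(i)} is the lexicographically least element of C(A) with M_i ∈ cone(A_{V_{σ(i)}}). For each j ∈ {1,…,k} define Q_j = { i ∈ {1,…,m} : (A_{V_j}ᵀ·A_{V_j})⁻¹·A_{V_j}ᵀ·M_i is entrywise nonnegative } and P_j = Q_j \ (Q_1 ∪ … ∪ Q_{j−1}). Then for all i ∈ {1,…,m} and j ∈ {1,…,k}: σ(i) = j if and only if i ∈ P_j. -/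

import Mathlib

open Matrix

/-- `U` indexes a maximal linearly independent set of columns of `A`
(an element of `C(A)`). -/
def MaximalIndepCols {n r : ℕ} (A : Matrix (Fin n) (Fin r) ℝ) (U : Finset (Fin r)) : Prop :=
  LinearIndependent ℝ (fun j : U => (fun i => A i j : Fin n → ℝ)) ∧
    ∀ V : Finset (Fin r), U ⊆ V →
      LinearIndependent ℝ (fun j : V => (fun i => A i j : Fin n → ℝ)) → V = U

/-- `cone(A_U)`: nonnegative combinations of the columns of `A` indexed by `U`. -/
def Cone {n r : ℕ} (A : Matrix (Fin n) (Fin r) ℝ) (U : Finset (Fin r)) : Set (Fin n → ℝ) :=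
  {x | ∃ c : Fin r → ℝ, (∀ i, 0 ≤ c i) ∧ (∀ i ∉ U, c i = 0) ∧ x = A.mulVec c}

/-- The `n × |U|` submatrix of `A` consisting of the columns indexed by `U`. -/
def ColSub {n r : ℕ} (A : Matrix (Fin n) (Fin r) ℝ) (U : Finset (Fin r)) :
    Matrix (Fin n) U ℝ := Matrix.of fun i j => A i j

/-- Strict lexicographic order on finite sets (comparing the increasing enumerations in
dictionary order). -/
def FinsetLexLT {r : ℕ} (U V : Finset (Fin r)) : Prop :=
  List.Lex (· < ·) (U.sort (· ≤ ·)) (V.sort (· ≤ ·))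

/-- `U ⪯ V` in the lexicographic order on finite sets. -/
def FinsetLexLE {r : ℕ} (U V : Finset (Fin r)) : Prop :=
  U = V ∨ FinsetLexLT U V

/-- `U` is the lexicographically least element of `C(A)` with `x ∈ cone(A_U)`. -/
def IsLexLeastBasis {n r : ℕ} (A : Matrix (Fin n) (Fin r) ℝ) (U : Finset (Fin r))
    (x : Fin n → ℝ) : Prop :=
  MaximalIndepCols A U ∧ x ∈ Cone A U ∧
    ∀ V : Finset (Fin r), MaximalIndepCols A V → x ∈ Cone A V → FinsetLexLE U V

/-- The pseudoinverse of the column submatrix `A_U` applied to `x`,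
i.e. `(A_Uᵀ A_U)⁻¹ A_Uᵀ x`. -/
noncomputable def pinvApply {n r : ℕ} (A : Matrix (Fin n) (Fin r) ℝ) (U : Finset (Fin r))
    (x : Fin n → ℝ) : U → ℝ :=
  (((ColSub A U)ᵀ * ColSub A U)⁻¹ * (ColSub A U)ᵀ).mulVec x

/-! For independent columns `A_U`, the matrix `(A_Uᵀ A_U)⁻¹ A_Uᵀ` is a left inverse of `A_U`;
since a maximal independent `U` spans the column space of `A`, it returns the coordinates of
`M_i` with respect to `A_U`, so nonnegativity of its output puts `M_i` in `cone(A_U)`. At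
`V (σ i)` these coordinates are the entries of `W'_i`, so `i ∈ Q_{σ i}`; by lexicographic
minimality of `V (σ i)`, `σ i` is the least `j` with `i ∈ Q_j`. -/

namespace Matrix

variable {m ι R : Type*} [Fintype m] [Fintype ι] [DecidableEq ι]
  [Field R] [LinearOrder R] [IsStrictOrderedRing R]

theorem isUnit_transpose_mul_self_of_linearIndependent {B : Matrix m ι R}
    (h : LinearIndependent R B.col) : IsUnit (Bᵀ * B) := by
  rw [← mulVec_injective_iff_isUnit, ← coe_mulVecLin, ← LinearMap.ker_eq_bot,
    ker_mulVecLin_transpose_mul_self, LinearMap.ker_eq_bot, coe_mulVecLin, mulVec_injective_iff]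
  exact h

end Matrix

section Columns

variable {n r : ℕ} {A : Matrix (Fin n) (Fin r) ℝ} {U : Finset (Fin r)}

theorem pinvApply_colSub_mulVec (h : LinearIndependent ℝ (ColSub A U).col) (c : U → ℝ) :
    pinvApply A U (ColSub A U *ᵥ c) = c := by
  have hdet := (isUnit_iff_isUnit_det _).mp (isUnit_transpose_mul_self_of_linearIndependent h)
  rw [pinvApply, mulVec_mulVec, Matrix.mul_assoc, nonsing_inv_mul _ hdet, one_mulVec]

theorem mulVec_eq_colSub_mulVec {c : Fin r → ℝ} (hc : ∀ t ∉ U, c t = 0) :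
    A *ᵥ c = ColSub A U *ᵥ fun j => c j := by
  funext i
  simp only [mulVec, dotProduct, ColSub, of_apply]
  rw [Finset.sum_coe_sort U fun t => A i t * c t]
  exact (Finset.sum_subset (Finset.subset_univ U) fun t _ ht => by simp [hc t ht]).symm

theorem pinvApply_mulVec_of_support (h : LinearIndependent ℝ (ColSub A U).col) {c : Fin r → ℝ}
    (hc : ∀ t ∉ U, c t = 0) : pinvApply A U (A *ᵥ c) = fun j : U => c j := by
  rw [mulVec_eq_colSub_mulVec hc, pinvApply_colSub_mulVec h]

theorem MaximalIndepCols.col_mem_span (hU : MaximalIndepCols A U) (t : Fin r) :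
    A.col t ∈ Submodule.span ℝ (A.col '' U) := by
  have hli : LinearIndepOn ℝ A.col (U : Set (Fin r)) := hU.1
  rw [hli.mem_span_iff]
  intro hins
  rw [← Finset.coe_insert] at hins
  rw [← hU.2 (insert t U) (Finset.subset_insert t U) hins]
  exact Finset.mem_insert_self t U

theorem MaximalIndepCols.exists_colSub_mulVec_eq (hU : MaximalIndepCols A U) (w : Fin r → ℝ) :
    ∃ c : U → ℝ, ColSub A U *ᵥ c = A *ᵥ w := by
  have hw : A *ᵥ w ∈ Submodule.span ℝ (A.col '' U) := by
    rw [mulVec_eq_sum]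
    exact Submodule.sum_mem _ fun t _ => by
      rw [op_smul_eq_smul]
      exact Submodule.smul_mem _ (w t) (hU.col_mem_span t)
  obtain ⟨c, hc⟩ := Fintype.mem_span_image_iff_exists_fun ℝ |>.mp hw
  refine ⟨c, ?_⟩
  rw [← hc, mulVec_eq_sum]
  simp only [op_smul_eq_smul]
  rfl

theorem MaximalIndepCols.mulVec_mem_cone_of_pinvApply_nonneg (hU : MaximalIndepCols A U)
    {w : Fin r → ℝ} (hpos : ∀ t, 0 ≤ pinvApply A U (A *ᵥ w) t) : A *ᵥ w ∈ Cone A U := by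
  obtain ⟨c, hc⟩ := hU.exists_colSub_mulVec_eq w
  rw [← hc, pinvApply_colSub_mulVec hU.1] at hpos
  let d : Fin r → ℝ := fun t => if h : t ∈ U then c ⟨t, h⟩ else 0
  have hd : ∀ t ∉ U, d t = 0 := fun t ht => dif_neg ht
  refine ⟨d, fun t => ?_, hd, ?_⟩
  · by_cases ht : t ∈ U
    · simpa [d, ht] using hpos ⟨t, ht⟩
    · rw [hd t ht]
  · rw [← hc, mulVec_eq_colSub_mulVec hd]
    congr
    funext j
    simp [d]

end Columns

theorem FinsetLexLE.not_finsetLexLT {r : ℕ} {U V : Finset (Fin r)} (h : FinsetLexLE U V) :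
    ¬ FinsetLexLT V U := by
  rcases h with rfl | h
  · exact fun h' => (List.Lex.asymm (· < ·)).asymm _ _ h' h'
  · exact List.Lex.asymm (· < ·) |>.asymm _ _ h

theorem IsLeast.eq_iff_mem_forall_lt_notMem {α : Type*} [LinearOrder α] {s : Set α} {a b : α}
    (h : IsLeast s a) :
    a = b ↔ b ∈ s ∧ ∀ c < b, c ∉ s := by
  refine ⟨?_, fun ⟨hb, hmin⟩ => (h.2 hb).antisymm (not_lt.mp fun hlt => hmin a hlt h.1)⟩
  rintro rfl
  exact ⟨h.1, fun c hc hcs => (h.2 hcs).not_gt hc⟩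

theorem stmt6_general {n m r k : ℕ}
    (A : Matrix (Fin n) (Fin r) ℝ) (W' : Matrix (Fin r) (Fin m) ℝ)
    (hW' : ∀ i j, 0 ≤ W' i j)
    (M : Matrix (Fin n) (Fin m) ℝ) (hM : M = A * W')
    (V : Fin k → Finset (Fin r))
    (hVmem : ∀ j, MaximalIndepCols A (V j))
    (hVmono : ∀ j j' : Fin k, j < j' → FinsetLexLT (V j) (V j'))
    (σ : Fin m → Fin k)
    (hσsupp : ∀ i : Fin m, ∀ t : Fin r, W' t i ≠ 0 → t ∈ V (σ i))
    (hσleast : ∀ i : Fin m, IsLexLeastBasis A (V (σ i)) (fun l => M l i)) :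
    ∀ (i : Fin m) (j : Fin k),
      σ i = j ↔
        ((∀ t, 0 ≤ pinvApply A (V j) (fun l => M l i) t) ∧
          ∀ j' : Fin k, j' < j → ¬ (∀ t, 0 ≤ pinvApply A (V j') (fun l => M l i) t)) := by
  intro i j
  have hMi : (fun l => M l i) = A *ᵥ fun t => W' t i := by
    funext l
    simp [hM, mul_apply, mulVec, dotProduct]
  have hsupp : ∀ t ∉ V (σ i), W' t i = 0 := fun t ht => not_not.mp (mt (hσsupp i t) ht)
  have hleast : IsLeast {j' | ∀ t, 0 ≤ pinvApply A (V j') (fun l => M l i) t} (σ i) := by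
    refine ⟨fun t => ?_, fun j' hj' => not_lt.mp fun hlt => ?_⟩
    · rw [hMi, pinvApply_mulVec_of_support (hVmem (σ i)).1 hsupp]
      exact hW' t i
    · have hcone : (fun l => M l i) ∈ Cone A (V j') := by
        rw [hMi] at hj' ⊢
        exact (hVmem j').mulVec_mem_cone_of_pinvApply_nonneg hj'
      exact ((hσleast i).2.2 _ (hVmem j') hcone).not_finsetLexLT (hVmono _ _ hlt)
  exact hleast.eq_iff_mem_forall_lt_notMem

/-- The choice function of a proper chain is realized by the simplicial
partition built from the sets `Q_j` and `P_j`: with `C(A)` listed in increasing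
lexicographic order as `V 1 ≺ ⋯ ≺ V k`, we have `σ i = j` iff `M_i ∈ P_j`. -/
theorem stmt6 {n m r k : ℕ}
    (A : Matrix (Fin n) (Fin r) ℝ) (W' : Matrix (Fin r) (Fin m) ℝ)
    (hA : ∀ i j, 0 ≤ A i j) (hW' : ∀ i j, 0 ≤ W' i j)
    (hrank : 1 ≤ A.rank)
    (M : Matrix (Fin n) (Fin m) ℝ) (hM : M = A * W')
    (V : Fin k → Finset (Fin r))
    (hVmem : ∀ j, MaximalIndepCols A (V j))
    (hVall : ∀ U : Finset (Fin r), MaximalIndepCols A U → ∃ j, U = V j)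
    (hVmono : ∀ j j' : Fin k, j < j' → FinsetLexLT (V j) (V j'))
    (σ : Fin m → Fin k)
    (hσsupp : ∀ i : Fin m, ∀ t : Fin r, W' t i ≠ 0 → t ∈ V (σ i))
    (hσleast : ∀ i : Fin m, IsLexLeastBasis A (V (σ i)) (fun l => M l i)) :
    ∀ (i : Fin m) (j : Fin k),
      σ i = j ↔
        ((∀ t, 0 ≤ pinvApply A (V j) (fun l => M l i) t) ∧
          ∀ j' : Fin k, j' < j → ¬ (∀ t, 0 ≤ pinvApply A (V j') (fun l => M l i) t)) :=
  stmt6_general A W' hW' M hM V hVmem hVmono σ hσsupp hσleast
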